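/- Let K be a compact metric space and F : K → [0,1] a Baire-1 function with β(F) ≤ n < ω, i.e., K_n(F,δ) = ∅ for all δ > 0. Then F ∈ B_{1/4}(K): for every ε > 0 there exists G ∈ DBSC(K) with ‖F − G‖_∞ ≤ ε and |G|_D ≤ 2n, so F is a uniform limit of DBSC functions with uniformly bounded DBSC norms. -/

import Mathlib

/-!
Fix `ε > 0` and write `L j = K_j(F, ε)`, a decreasing sequence of closed sets with `L 0 = K`
and `L n = ∅`. Let `u j` be the upper semicontinuous envelope of `F` restricted to `L j`: it is
the pointwise limit of the decreasing `m`-Lipschitz functions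
`x ↦ max 0 (sup_{y ∈ L j} F y - m d(x,y))`.
On `L j \ L (j+1)` the oscillation of `F|L j` is below `ε`, so there `F ≤ u j ≤ F + ε`, and
`G = ∑_{j<n} u j · 1_{L j \ L (j+1)}` is uniformly `ε`-close to `F`. Each summand is
`u j - min (u j) 1_{L (j+1)}`, a difference of two limits of decreasing sequences of continuous
functions with values in `[0, 1]`; such a difference has DBSC norm at most `2`.
-/

open Filter

/-- The oscillation of `F` restricted to `L` at `x` is at least `δ`. -/
def oscGE {K : Type*} [TopologicalSpace K] (F : K → ℝ) (L : Set K) (x : K) (δ : ℝ) : Prop :=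
  ∀ U ∈ nhds x, ∀ η < δ, ∃ y ∈ L ∩ U, ∃ z ∈ L ∩ U, η < F y - F z

/-- The oscillation derived sets `K_α(F, δ)` (finite stages). -/
def oscDerivedSet {K : Type*} [TopologicalSpace K] (F : K → ℝ) (δ : ℝ) : ℕ → Set K
  | 0 => Set.univ
  | n + 1 => {x ∈ oscDerivedSet F δ n | oscGE F (oscDerivedSet F δ n) x δ}

open Topology Finset

lemma sum_abs_sub_sub_le_of_antitone {a b : ℕ → ℝ} (ha : Antitone a) (hb : Antitone b)
    (N : ℕ) :
    ∑ i ∈ range N, |(a (i + 1) - b (i + 1)) - (a i - b i)| ≤ (a 0 - a N) + (b 0 - b N) := by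
  rw [← sum_range_sub' a, ← sum_range_sub' b, ← sum_add_distrib]
  refine sum_le_sum fun i _ => abs_le.2 ⟨?_, ?_⟩ <;>
    linarith [ha (Nat.le_succ i), hb (Nat.le_succ i)]

lemma exists_mem_sdiff_succ {α : Type*} {s : ℕ → Set α} {x : α} {n : ℕ} (h0 : x ∈ s 0)
    (hn : x ∉ s n) : ∃ r < n, x ∈ s r \ s (r + 1) := by
  induction n with
  | zero => exact absurd h0 hn
  | succ n ih =>
    by_cases hx : x ∈ s n
    · exact ⟨n, n.lt_succ_self, hx, hn⟩
    · obtain ⟨r, hr, hxr⟩ := ih hx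
      exact ⟨r, hr.trans n.lt_succ_self, hxr⟩

lemma Antitone.sum_indicator_sdiff_succ {α M : Type*} [AddCommMonoid M] {s : ℕ → Set α}
    (hs : Antitone s) (v : ℕ → α → M) {x : α} {r n : ℕ} (hrn : r < n)
    (hx : x ∈ s r \ s (r + 1)) :
    ∑ j ∈ range n, (s j \ s (j + 1)).indicator (v j) x = v r x := by
  rw [sum_eq_single_of_mem r (mem_range.2 hrn) fun j _ hjr => Set.indicator_of_notMem ?_ _,
    Set.indicator_of_mem hx]
  rintro ⟨hxj, hxj'⟩
  rcases hjr.lt_or_gt with hjr | hjr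
  · exact hxj' (hs hjr hx.1)
  · exact hx.2 (hs hjr hxj)

/-- A witness of `|G|_D ≤ C`. -/
def HasDBSCBound {K : Type*} [TopologicalSpace K] (G : K → ℝ) (C : ℝ) : Prop :=
  ∃ g : ℕ → K → ℝ, (∀ m, Continuous (g m)) ∧ g 0 = 0 ∧
    (∀ k, Tendsto (fun m => g m k) atTop (𝓝 (G k))) ∧
    ∀ (k : K) (N : ℕ), ∑ i ∈ range N, |g (i + 1) k - g i k| ≤ C

namespace HasDBSCBound

variable {K : Type*} [TopologicalSpace K]

theorem zero : HasDBSCBound (0 : K → ℝ) 0 :=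
  ⟨0, fun _ => continuous_const, rfl, fun _ => tendsto_const_nhds, fun _ _ => by simp⟩

theorem add {G H : K → ℝ} {C D : ℝ} (hG : HasDBSCBound G C) (hH : HasDBSCBound H D) :
    HasDBSCBound (G + H) (C + D) := by
  obtain ⟨g, hgc, hg0, hgG, hgC⟩ := hG
  obtain ⟨h, hhc, hh0, hhH, hhD⟩ := hH
  refine ⟨g + h, fun m => (hgc m).add (hhc m), by rw [Pi.add_apply, hg0, hh0, add_zero],
    fun k => (hgG k).add (hhH k), fun k N => ?_⟩
  calc ∑ i ∈ range N, |(g + h) (i + 1) k - (g + h) i k|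
      ≤ ∑ i ∈ range N, (|g (i + 1) k - g i k| + |h (i + 1) k - h i k|) :=
        sum_le_sum fun i _ => by
          simpa only [Pi.add_apply, add_sub_add_comm] using abs_add_le _ _
    _ ≤ C + D := by
        rw [sum_add_distrib]
        exact add_le_add (hgC k N) (hhD k N)

theorem sum {ι : Type*} {s : Finset ι} {G : ι → K → ℝ} {C : ι → ℝ}
    (h : ∀ i ∈ s, HasDBSCBound (G i) (C i)) :
    HasDBSCBound (∑ i ∈ s, G i) (∑ i ∈ s, C i) := by
  classical
  induction s using Finset.induction_on with
  | empty => simpa using zero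
  | insert i s hi ih =>
    rw [sum_insert hi, sum_insert hi]
    exact (h i (mem_insert_self i s)).add (ih fun j hj => h j (mem_insert_of_mem hj))

/-- The DBSC sequence is `0, a 0 - b 0, a 1 - b 1, …`; the first jump `a 0 - b 0` and the two
telescoping sums `a 0 - a N`, `b 0 - b N` add up to `2 a 0 - a N - b N ≤ 2`. -/
theorem of_antitone_sub {a b : ℕ → K → ℝ} {u w : K → ℝ}
    (hac : ∀ m, Continuous (a m)) (hbc : ∀ m, Continuous (b m))
    (ha : Antitone a) (hb : Antitone b)
    (hau : ∀ k, Tendsto (fun m => a m k) atTop (𝓝 (u k)))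
    (hbw : ∀ k, Tendsto (fun m => b m k) atTop (𝓝 (w k)))
    (ha1 : ∀ k, a 0 k ≤ 1) (hb0 : ∀ m k, 0 ≤ b m k) (hba : ∀ m k, b m k ≤ a m k) :
    HasDBSCBound (fun k => u k - w k) 2 := by
  refine ⟨fun | 0 => 0 | m + 1 => a m - b m, ?_, rfl, fun k => ?_, fun k N => ?_⟩
  · rintro (_ | m)
    exacts [continuous_const, (hac m).sub (hbc m)]
  · exact (tendsto_add_atTop_iff_nat 1).1 ((hau k).sub (hbw k))
  · cases N with
    | zero => simp
    | succ N =>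
      rw [sum_range_succ']
      have hvar := sum_abs_sub_sub_le_of_antitone (a := fun m => a m k) (b := fun m => b m k)
        (fun _ _ h => ha h k) (fun _ _ h => hb h k) N
      simp only [Pi.sub_apply, Pi.zero_apply, sub_zero] at hvar ⊢
      rw [abs_of_nonneg (sub_nonneg.2 (hba 0 k))]
      linarith [ha1 k, hb0 N k, hba N k]

end HasDBSCBound

section UpperEnvelope

variable {K : Type*} [PseudoMetricSpace K]

noncomputable def lipApprox (f : K → ℝ) (L : Set K) (m : ℕ) (x : K) : ℝ :=
  max 0 (⨆ y : L, f y - m * dist x y)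

noncomputable def upperEnvelope (f : K → ℝ) (L : Set K) (x : K) : ℝ :=
  ⨅ m, lipApprox f L m x

variable {f : K → ℝ} {L : Set K} {m : ℕ} {x : K}

lemma lipApprox_nonneg : 0 ≤ lipApprox f L m x := le_max_left _ _

lemma lipApprox_le {c : ℝ} (hc : 0 ≤ c) (h : ∀ y ∈ L, f y - m * dist x y ≤ c) :
    lipApprox f L m x ≤ c :=
  max_le hc (Real.iSup_le (fun y => h y y.2) hc)

lemma sub_le_lipApprox (hf : ∀ y, f y ≤ 1) {y : K} (hy : y ∈ L) :
    f y - m * dist x y ≤ lipApprox f L m x := by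
  refine le_trans (le_ciSup (f := fun z : L => f z - m * dist x z) ⟨1, ?_⟩ ⟨y, hy⟩)
    (le_max_right _ _)
  rintro _ ⟨z, rfl⟩
  have : (0 : ℝ) ≤ m * dist x z := by positivity
  linarith [hf z]

lemma lipApprox_le_one (hf : ∀ y, f y ≤ 1) : lipApprox f L m x ≤ 1 :=
  lipApprox_le zero_le_one fun y _ => by
    have : (0 : ℝ) ≤ m * dist x y := by positivity
    linarith [hf y]

lemma le_lipApprox_self (hf : ∀ y, f y ≤ 1) (hx : x ∈ L) : f x ≤ lipApprox f L m x := by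
  simpa using sub_le_lipApprox (m := m) (x := x) hf hx

lemma lipApprox_antitone (hf : ∀ y, f y ≤ 1) : Antitone (lipApprox f L) :=
  antitone_nat_of_succ_le fun m x => lipApprox_le lipApprox_nonneg fun y hy => by
    refine le_trans ?_ (sub_le_lipApprox hf hy)
    have : (0 : ℝ) ≤ dist x y := dist_nonneg
    push_cast
    linarith

lemma lipschitzWith_lipApprox (hf : ∀ y, f y ≤ 1) : LipschitzWith m (lipApprox f L m) := by
  refine LipschitzWith.of_le_add_mul _ fun x x' => lipApprox_le
    (add_nonneg lipApprox_nonneg (mul_nonneg (NNReal.coe_nonneg _) dist_nonneg)) fun y hy => ?_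
  have hx' := sub_le_lipApprox (m := m) (x := x') hf hy
  have htri : (m : ℝ) * dist x' y ≤ m * dist x x' + m * dist x y := by
    rw [← mul_add, dist_comm x x']
    exact mul_le_mul_of_nonneg_left (dist_triangle _ _ _) (Nat.cast_nonneg m)
  push_cast
  linarith

lemma lipApprox_le_of_eventually (hf : ∀ y, f y ≤ 1) {c : ℝ} (hc : 0 ≤ c)
    (h : ∀ᶠ y in 𝓝 x, y ∈ L → f y ≤ c) : ∃ m, lipApprox f L m x ≤ c := by
  obtain ⟨ρ, hρ, hball⟩ := Metric.eventually_nhds_iff.1 h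
  obtain ⟨m, hm⟩ := exists_nat_ge (1 / ρ)
  refine ⟨m, lipApprox_le hc fun y hy => ?_⟩
  by_cases hxy : dist y x < ρ
  · have : (0 : ℝ) ≤ m * dist x y := by positivity
    linarith [hball hxy hy]
  · have hmρ : 1 ≤ m * ρ := by rwa [div_le_iff₀ hρ] at hm
    have : (m : ℝ) * ρ ≤ m * dist x y :=
      mul_le_mul_of_nonneg_left (dist_comm x y ▸ not_lt.1 hxy) (Nat.cast_nonneg m)
    linarith [hf y]

lemma tendsto_lipApprox (hf : ∀ y, f y ≤ 1) :
    Tendsto (fun m => lipApprox f L m x) atTop (𝓝 (upperEnvelope f L x)) :=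
  tendsto_atTop_ciInf (fun _ _ h => lipApprox_antitone hf h x)
    ⟨0, by rintro _ ⟨m, rfl⟩; exact lipApprox_nonneg⟩

lemma upperEnvelope_nonneg : 0 ≤ upperEnvelope f L x :=
  le_ciInf fun _ => lipApprox_nonneg

lemma upperEnvelope_le_lipApprox (m : ℕ) : upperEnvelope f L x ≤ lipApprox f L m x :=
  ciInf_le ⟨0, by rintro _ ⟨m, rfl⟩; exact lipApprox_nonneg⟩ m

lemma upperEnvelope_le_one (hf : ∀ y, f y ≤ 1) : upperEnvelope f L x ≤ 1 :=
  (upperEnvelope_le_lipApprox 0).trans (lipApprox_le_one hf)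

lemma le_upperEnvelope_self (hf : ∀ y, f y ≤ 1) (hx : x ∈ L) : f x ≤ upperEnvelope f L x :=
  le_ciInf fun _ => le_lipApprox_self hf hx

lemma upperEnvelope_le_of_eventually (hf : ∀ y, f y ≤ 1) {c : ℝ} (hc : 0 ≤ c)
    (h : ∀ᶠ y in 𝓝 x, y ∈ L → f y ≤ c) : upperEnvelope f L x ≤ c :=
  let ⟨m, hm⟩ := lipApprox_le_of_eventually hf hc h
  (upperEnvelope_le_lipApprox m).trans hm

lemma upperEnvelope_eq_zero (hf : ∀ y, f y ≤ 1) (hL : IsClosed L) (hx : x ∉ L) :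
    upperEnvelope f L x = 0 :=
  le_antisymm (upperEnvelope_le_of_eventually hf le_rfl <|
    mem_of_superset (hL.isOpen_compl.mem_nhds hx) fun _ hy hyL => absurd hyL hy)
    upperEnvelope_nonneg

lemma upperEnvelope_one_eq_indicator (hL : IsClosed L) :
    upperEnvelope (fun _ => 1) L = L.indicator 1 := by
  funext x
  by_cases hx : x ∈ L
  · rw [Set.indicator_of_mem hx]
    exact le_antisymm (upperEnvelope_le_one fun _ => le_rfl)
      (le_upperEnvelope_self (fun _ => le_rfl) hx)
  · rw [Set.indicator_of_notMem hx]
    exact upperEnvelope_eq_zero (fun _ => le_rfl) hL hx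

lemma upperEnvelope_sub_min_indicator (hf : ∀ y, f y ≤ 1) (hL : IsClosed L) (L' : Set K) :
    upperEnvelope f L x - min (upperEnvelope f L x) (L'.indicator 1 x) =
      (L \ L').indicator (upperEnvelope f L) x := by
  by_cases hx' : x ∈ L'
  · rw [Set.indicator_of_mem hx', Pi.one_apply, min_eq_left (upperEnvelope_le_one hf), sub_self,
      Set.indicator_of_notMem fun h => h.2 hx']
  rw [Set.indicator_of_notMem hx', min_eq_right upperEnvelope_nonneg, sub_zero]
  by_cases hx : x ∈ L
  · rw [Set.indicator_of_mem (Set.mem_sdiff_of_mem hx hx')]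
  · rw [Set.indicator_of_notMem fun h => hx h.1, upperEnvelope_eq_zero hf hL hx]

theorem hasDBSCBound_indicator_sdiff_upperEnvelope (hf : ∀ y, f y ≤ 1) {L' : Set K}
    (hL : IsClosed L) (hL' : IsClosed L') :
    HasDBSCBound ((L \ L').indicator (upperEnvelope f L)) 2 := by
  have hone : ∀ _ : K, (1 : ℝ) ≤ 1 := fun _ => le_rfl
  have hmin : ∀ k, Tendsto (fun m => min (lipApprox f L m k) (lipApprox (fun _ => 1) L' m k))
      atTop (𝓝 (min (upperEnvelope f L k) (L'.indicator 1 k))) := fun k => by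
    rw [← upperEnvelope_one_eq_indicator hL']
    exact (tendsto_lipApprox hf).min (tendsto_lipApprox hone)
  have h := HasDBSCBound.of_antitone_sub
    (b := fun m k => min (lipApprox f L m k) (lipApprox (fun _ => 1) L' m k))
    (fun _ => (lipschitzWith_lipApprox hf).continuous)
    (fun _ => (lipschitzWith_lipApprox hf).continuous.min
      (lipschitzWith_lipApprox hone).continuous)
    (lipApprox_antitone hf)
    (fun _ _ h k => min_le_min (lipApprox_antitone hf h k) (lipApprox_antitone hone h k))
    (fun _ => tendsto_lipApprox hf) hmin (fun _ => lipApprox_le_one hf)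
    (fun _ _ => le_min lipApprox_nonneg lipApprox_nonneg) (fun _ _ => min_le_left _ _)
  convert h using 2 with k
  exact (upperEnvelope_sub_min_indicator hf hL L').symm

end UpperEnvelope

section OscDerivedSet

variable {K : Type*}

lemma isClosed_setOf_oscGE [TopologicalSpace K] (F : K → ℝ) (L : Set K) (δ : ℝ) :
    IsClosed {x | oscGE F L x δ} := by
  refine isOpen_compl_iff.1 (isOpen_iff_mem_nhds.2 fun x hx => ?_)
  simp only [Set.mem_compl_iff, Set.mem_ofPred_eq, oscGE] at hx
  push Not at hx
  obtain ⟨U, hU, η, hη, hUη⟩ := hx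
  filter_upwards [eventually_mem_nhds_iff.2 hU] with x' hx' hosc
  obtain ⟨y, hy, z, hz, hyz⟩ := hosc U hx' η hη
  exact (hUη y hy z hz).not_gt hyz

lemma isClosed_oscDerivedSet [TopologicalSpace K] (F : K → ℝ) (δ : ℝ) :
    ∀ n, IsClosed (oscDerivedSet F δ n)
  | 0 => isClosed_univ
  | n + 1 => (isClosed_oscDerivedSet F δ n).inter (isClosed_setOf_oscGE F _ δ)

lemma antitone_oscDerivedSet [TopologicalSpace K] (F : K → ℝ) (δ : ℝ) :
    Antitone (oscDerivedSet F δ) :=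
  antitone_nat_of_succ_le fun _ _ hx => hx.1

lemma upperEnvelope_le_add_of_not_oscGE [PseudoMetricSpace K] {F : K → ℝ} {L : Set K} {x : K}
    {δ : ℝ} (hF : ∀ y, F y ≤ 1) (hx : x ∈ L) (hosc : ¬ oscGE F L x δ)
    (hδ : 0 ≤ F x + δ) :
    upperEnvelope F L x ≤ F x + δ := by
  simp only [oscGE] at hosc
  push Not at hosc
  obtain ⟨U, hU, η, hη, hUη⟩ := hosc
  refine upperEnvelope_le_of_eventually hF hδ ?_
  filter_upwards [hU] with y hyU hyL
  linarith [hUη y ⟨hyL, hyU⟩ x ⟨hx, mem_of_mem_nhds hU⟩]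

end OscDerivedSet

theorem stmt9_general {K : Type*} [MetricSpace K] (F : K → ℝ)
    (hrange : ∀ k, F k ∈ Set.Icc (0 : ℝ) 1)
    (n : ℕ) (hβ : ∀ δ > (0 : ℝ), oscDerivedSet F δ n = ∅) :
    ∀ ε > (0 : ℝ), ∃ G : K → ℝ, (∀ k, |F k - G k| ≤ ε) ∧
      ∃ g : ℕ → K → ℝ, (∀ m, Continuous (g m)) ∧ g 0 = 0 ∧
        (∀ k, Tendsto (fun m => g m k) atTop (nhds (G k))) ∧
        ∀ (k : K) (N : ℕ), ∑ i ∈ Finset.range N, |g (i+1) k - g i k| ≤ 2 * n := by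
  intro ε hε
  have hF : ∀ y, F y ≤ 1 := fun y => (hrange y).2
  set L := oscDerivedSet F ε
  refine ⟨∑ j ∈ range n, (L j \ L (j + 1)).indicator (upperEnvelope F (L j)),
    fun x => ?_, ?_⟩
  · obtain ⟨r, hrn, hx⟩ := exists_mem_sdiff_succ (s := L) (n := n) (Set.mem_univ x)
      (by simp [L, hβ ε hε])
    rw [Finset.sum_apply, (antitone_oscDerivedSet F ε).sum_indicator_sdiff_succ _ hrn hx,
      abs_sub_le_iff]
    have hup := upperEnvelope_le_add_of_not_oscGE hF hx.1 (fun h => hx.2 ⟨hx.1, h⟩)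
      (by linarith [(hrange x).1])
    constructor <;> linarith [le_upperEnvelope_self hF hx.1]
  · have h := HasDBSCBound.sum (s := range n) fun j _ =>
      hasDBSCBound_indicator_sdiff_upperEnvelope hF (isClosed_oscDerivedSet F ε j)
        (isClosed_oscDerivedSet F ε (j + 1))
    rwa [sum_const, card_range, nsmul_eq_mul, mul_comm] at h

/-- Let `F : K → [0,1]` be Baire-1 with `K_n(F,δ) = ∅` for all `δ > 0`.
Then for every `ε > 0` there is `G` with `‖F − G‖_∞ ≤ ε` and `|G|_D ≤ 2n`;
i.e. `F ∈ B_{1/4}(K)`. -/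
theorem stmt9 {K : Type*} [MetricSpace K] [CompactSpace K] (F : K → ℝ)
    (hrange : ∀ k, F k ∈ Set.Icc (0 : ℝ) 1)
    (hB1 : ∃ f : ℕ → K → ℝ, (∀ m, Continuous (f m)) ∧
      ∀ k, Tendsto (fun m => f m k) atTop (nhds (F k)))
    (n : ℕ) (hβ : ∀ δ > (0 : ℝ), oscDerivedSet F δ n = ∅) :
    ∀ ε > (0 : ℝ), ∃ G : K → ℝ, (∀ k, |F k - G k| ≤ ε) ∧
      ∃ g : ℕ → K → ℝ, (∀ m, Continuous (g m)) ∧ g 0 = 0 ∧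
        (∀ k, Tendsto (fun m => g m k) atTop (nhds (G k))) ∧
        ∀ (k : K) (N : ℕ), ∑ i ∈ Finset.range N, |g (i+1) k - g i k| ≤ 2 * n :=
  stmt9_general F hrange n hβ
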